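/- Let G be a graph and F, H : V(G) → 2^ℕ with F(v) = [0, d_G(v)] \ H(v) for every vertex v, where (G,H) is dense. If |F(v)| ≤ (d_G(v) − 1)/2 for every vertex v, then G admits an H-orientation; equivalently, G has an orientation O with d⁺_O(v) ∉ F(v) for every v. -/

import Mathlib

/-- An orientation of a graph: each edge is assigned a source endpoint. -/
structure GOrientation {V : Type*} (G : SimpleGraph V) where
  src : Sym2 V → V
  mem : ∀ e ∈ G.edgeSet, src e ∈ e

/-- Out-degree of `v` under orientation `O`: number of edges whose source is `v`. -/
noncomputable def outDeg {V : Type*} {G : SimpleGraph V} (O : GOrientation G) (v : V) : ℕ :=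
  Set.ncard {e ∈ G.edgeSet | O.src e = v}

/-- Degree of a vertex. -/
noncomputable def deg {V : Type*} (G : SimpleGraph V) (v : V) : ℕ :=
  (G.neighborSet v).ncard

/-- The pair `(G, H)` is dense: `G` is connected and `i ∉ H v → i+1 ∈ H v`. -/
def DensePair {V : Type*} (G : SimpleGraph V) (H : V → Set ℕ) : Prop :=
  G.Connected ∧ ∀ v : V, ∀ i : ℕ, i ∉ H v → i + 1 ∈ H v

/-- `D⁺_{G,H}(u)`: possible out-degrees of `u` over orientations feasible away from `u`. -/
noncomputable def Dset {V : Type*} (G : SimpleGraph V) (H : V → Set ℕ) (u : V) : Set ℕ :=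
  {d | ∃ O : GOrientation G, (∀ x, x ≠ u → outDeg O x ∈ H x) ∧ outDeg O u = d}

/-- `x` is a cut vertex: `G` is connected but `G - x` is not. -/
def IsCutVertex {V : Type*} (G : SimpleGraph V) (x : V) : Prop :=
  G.Connected ∧ ¬ (G.induce ({x}ᶜ : Set V)).Connected

/-!
Suppose there is no `H`-orientation, and call `v` a defect of an orientation if its out-degree is
not in `H v`. Redirecting an edge at a defect `a` moves the out-degree of `a` by one, so by density
`a` stops being a defect; only the other endpoint can become one. Defects can therefore be pushed
along walks and merged, so some orientation has exactly one defect, and this defect can be moved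
to any vertex. Move it to a vertex `z` such that `G - z` is still connected. Redirecting two edges
at `z` of the same direction, and carrying the defect between their other endpoints inside `G - z`,
changes the out-degree of `z` by `±2` while `z` remains the only defect. Hence every value in
`[0, d(z)]` of the parity of the out-degree of `z` lies in `F z`, so `|F z| ≥ d(z) / 2`.
-/

open SimpleGraph

lemma Nat.le_two_mul_ncard_of_forall_mod_two_eq {S : Set ℕ} (hS : S.Finite) {n m : ℕ}
    (h : ∀ i ≤ n, i % 2 = m % 2 → i ∈ S) : n ≤ 2 * S.ncard := by
  let A := (Finset.range ((n + 1) / 2)).image (m % 2 + 2 * ·)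
  have hA : (A : Set ℕ) ⊆ S := by
    intro i hi
    obtain ⟨j, hj, rfl⟩ := Finset.mem_image.mp hi
    rw [Finset.mem_range] at hj
    exact h _ (by omega) (by omega)
  calc n ≤ 2 * ((n + 1) / 2) := by omega
    _ = 2 * A.card := by
      rw [Finset.card_image_of_injective _ fun a b hab => by omega, Finset.card_range]
    _ ≤ 2 * S.ncard := by
      rw [← Set.ncard_coe_finset]
      exact Nat.mul_le_mul_left 2 (Set.ncard_le_ncard hA hS)

namespace SimpleGraph

variable {V : Type*} {G : SimpleGraph V}

lemma ncard_incidenceSet_eq_deg (v : V) : (G.incidenceSet v).ncard = deg G v := by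
  classical
  exact Nat.card_congr (G.incidenceSetEquivNeighborSet v)

lemma exists_adj_eq_of_mem_edgeSet {e : Sym2 V} (he : e ∈ G.edgeSet) {v : V} (hv : v ∈ e) :
    ∃ w, G.Adj v w ∧ e = s(v, w) :=
  ⟨Sym2.Mem.other hv, by rwa [← mem_edgeSet, Sym2.other_spec], (Sym2.other_spec hv).symm⟩

lemma exists_walk_forall_edges_notMem {z : V} (hz : (G.induce {z}ᶜ).Preconnected) {w t : V}
    (hw : w ≠ z) (ht : t ≠ z) : ∃ p : G.Walk w t, ∀ e ∈ p.edges, z ∉ e := by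
  obtain ⟨q⟩ := hz ⟨w, hw⟩ ⟨t, ht⟩
  have hq : ∀ e ∈ (q.map (Embedding.induce _).toHom).edges, z ∉ e := by
    intro e he hze
    rw [Walk.edges_map, List.mem_map] at he
    obtain ⟨e', -, rfl⟩ := he
    obtain ⟨x, -, hx⟩ := Sym2.mem_map.mp hze
    exact x.2 hx
  exact ⟨_, hq⟩

end SimpleGraph

namespace GOrientation

variable {V : Type*} {G : SimpleGraph V}

instance : Nonempty (GOrientation G) := ⟨⟨fun e => e.out.1, fun e _ => Sym2.out_fst_mem e⟩⟩

def outEdges (O : GOrientation G) (v : V) : Set (Sym2 V) := {e ∈ G.edgeSet | O.src e = v}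

lemma outDeg_eq_ncard_outEdges (O : GOrientation G) (v : V) :
    outDeg O v = (O.outEdges v).ncard := rfl

lemma outEdges_subset_incidenceSet (O : GOrientation G) (v : V) :
    O.outEdges v ⊆ G.incidenceSet v := fun e he => ⟨he.1, he.2 ▸ O.mem e he.1⟩

lemma outDeg_le_deg [Finite V] (O : GOrientation G) (v : V) : outDeg O v ≤ deg G v := by
  rw [← G.ncard_incidenceSet_eq_deg]
  exact Set.ncard_le_ncard (O.outEdges_subset_incidenceSet v)

lemma outDeg_congr {O O' : GOrientation G} {v : V} (h : ∀ e, v ∈ e → O'.src e = O.src e) :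
    outDeg O' v = outDeg O v := by
  have : O'.outEdges v = O.outEdges v := by
    ext e
    refine ⟨fun ⟨he, hs⟩ => ⟨he, ?_⟩, fun ⟨he, hs⟩ => ⟨he, ?_⟩⟩
    · rwa [← h e (hs ▸ O'.mem e he)]
    · rwa [h e (hs ▸ O.mem e he)]
  rw [outDeg_eq_ncard_outEdges, outDeg_eq_ncard_outEdges, this]

open Classical in
noncomputable def setSrc (O : GOrientation G) (e₀ : Sym2 V) (w : V) (hw : w ∈ e₀) :
    GOrientation G where
  src := Function.update O.src e₀ w
  mem e he := by
    rcases eq_or_ne e e₀ with rfl | h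
    · simpa using hw
    · simpa [Function.update_of_ne h] using O.mem e he

lemma exists_setSrc_ne (O : GOrientation G) {a u : V} (hau : a ≠ u) :
    ∃ w, w ∈ s(a, u) ∧ O.src s(a, u) ≠ w := by
  by_cases h : O.src s(a, u) = a
  · exact ⟨u, Sym2.mem_mk_right a u, by rwa [h]⟩
  · exact ⟨a, Sym2.mem_mk_left a u, h⟩

section setSrc

variable (O : GOrientation G) {e₀ : Sym2 V} {w : V} (hw : w ∈ e₀)

lemma setSrc_src_self : (O.setSrc e₀ w hw).src e₀ = w := by
  classical
  simp [setSrc]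

lemma setSrc_src_of_ne {e : Sym2 V} (h : e ≠ e₀) : (O.setSrc e₀ w hw).src e = O.src e := by
  classical
  simp [setSrc, Function.update_of_ne h]

lemma outDeg_setSrc_of_notMem {v : V} (hv : v ∉ e₀) :
    outDeg (O.setSrc e₀ w hw) v = outDeg O v :=
  outDeg_congr fun e he => O.setSrc_src_of_ne hw (by rintro rfl; exact hv he)

variable [Finite V] (he₀ : e₀ ∈ G.edgeSet) (hsw : O.src e₀ ≠ w)
include he₀ hsw

lemma outDeg_setSrc_target : outDeg (O.setSrc e₀ w hw) w = outDeg O w + 1 := by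
  have : (O.setSrc e₀ w hw).outEdges w = insert e₀ (O.outEdges w) := by
    ext e
    rcases eq_or_ne e e₀ with rfl | h
    · simp [outEdges, setSrc_src_self, he₀]
    · simp [outEdges, setSrc_src_of_ne _ _ h, h]
  rw [outDeg_eq_ncard_outEdges, this, Set.ncard_insert_of_notMem (fun h => hsw h.2),
    outDeg_eq_ncard_outEdges]

lemma outDeg_setSrc_source :
    outDeg (O.setSrc e₀ w hw) (O.src e₀) + 1 = outDeg O (O.src e₀) := by
  have : (O.setSrc e₀ w hw).outEdges (O.src e₀) = O.outEdges (O.src e₀) \ {e₀} := by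
    ext e
    rcases eq_or_ne e e₀ with rfl | h
    · simp [outEdges, setSrc_src_self, hsw.symm]
    · simp [outEdges, setSrc_src_of_ne _ _ h, h]
  rw [outDeg_eq_ncard_outEdges, this,
    Set.ncard_sdiff_singleton_add_one (show e₀ ∈ O.outEdges (O.src e₀) from ⟨he₀, rfl⟩),
    outDeg_eq_ncard_outEdges]

end setSrc

lemma outDeg_setSrc_mem [Finite V] {H : V → Set ℕ}
    (hdense : ∀ v i, i ∉ H v → i + 1 ∈ H v) {O : GOrientation G} {a u w : V}
    (hadj : G.Adj a u) (hw : w ∈ s(a, u)) (hsw : O.src s(a, u) ≠ w) (ha : outDeg O a ∉ H a) :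
    outDeg (O.setSrc s(a, u) w hw) a ∈ H a := by
  have he : s(a, u) ∈ G.edgeSet := hadj
  rcases Sym2.mem_iff.mp hw with rfl | rfl
  · rw [O.outDeg_setSrc_target hw he hsw]
    exact hdense _ _ ha
  · have hdeg := O.outDeg_setSrc_source hw he hsw
    rw [(Sym2.mem_iff.mp (O.mem _ he)).resolve_right hsw] at hdeg
    by_contra h
    exact ha (hdeg ▸ hdense _ _ h)

end GOrientation

section BadSet

variable {V : Type*} {G : SimpleGraph V} {H : V → Set ℕ}

def badSet (H : V → Set ℕ) (O : GOrientation G) : Set V := {v | outDeg O v ∉ H v}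

lemma mem_badSet {O : GOrientation G} {v : V} : v ∈ badSet H O ↔ outDeg O v ∉ H v := Iff.rfl

variable [Finite V] (hdense : ∀ v i, i ∉ H v → i + 1 ∈ H v)
include hdense

lemma exists_ncard_badSet_lt {a b : V} (p : G.Walk a b) (hab : a ≠ b) {O : GOrientation G}
    (ha : a ∈ badSet H O) (hb : b ∈ badSet H O) :
    ∃ O' : GOrientation G, (badSet H O').ncard < (badSet H O).ncard := by
  induction p generalizing O with
  | nil => exact absurd rfl hab
  | @cons a u b hadj q ih =>
    obtain ⟨w, hw, hsw⟩ := O.exists_setSrc_ne hadj.ne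
    have hbad : ∀ v ∈ badSet H (O.setSrc s(a, u) w hw), v ≠ u → v ∈ badSet H O \ {a} := by
      intro v hv hvu
      have hva : v ≠ a := by
        rintro rfl
        exact hv (O.outDeg_setSrc_mem hdense hadj hw hsw ha)
      rw [mem_badSet, O.outDeg_setSrc_of_notMem hw (by simp [hva, hvu])] at hv
      exact ⟨hv, hva⟩
    by_cases hu : u ∈ badSet H (O.setSrc s(a, u) w hw) ∧ u ≠ b
    · have hb' : b ∈ badSet H (O.setSrc s(a, u) w hw) := by
        rw [mem_badSet, O.outDeg_setSrc_of_notMem hw (by simp [hab.symm, hu.2.symm])]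
        exact hb
      obtain ⟨O', hO'⟩ := ih hu.2 hu.1 hb'
      refine ⟨O', hO'.trans_le ?_⟩
      calc (badSet H (O.setSrc s(a, u) w hw)).ncard
          ≤ (insert u (badSet H O \ {a})).ncard :=
            Set.ncard_le_ncard fun v hv => (eq_or_ne v u).elim Or.inl fun h => Or.inr (hbad v hv h)
        _ ≤ (badSet H O \ {a}).ncard + 1 := Set.ncard_insert_le _ _
        _ = (badSet H O).ncard := Set.ncard_sdiff_singleton_add_one ha
    · refine ⟨O.setSrc s(a, u) w hw, (Set.ncard_le_ncard fun v hv => ?_).trans_lt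
        (Set.ncard_sdiff_singleton_lt_of_mem ha)⟩
      rcases eq_or_ne v u with rfl | hvu
      · obtain rfl : v = b := by tauto
        exact ⟨hb, hab.symm⟩
      · exact hbad v hv hvu

end BadSet

section FeasibleAway

variable {V : Type*} {G : SimpleGraph V} {H : V → Set ℕ}

/-- `Dset G H u` is the set of `outDeg O u` over the orientations `O` with `FeasibleAway H O u`. -/
def FeasibleAway (H : V → Set ℕ) (O : GOrientation G) (u : V) : Prop :=
  ∀ x, x ≠ u → outDeg O x ∈ H x

lemma FeasibleAway.outDeg_notMem (hno : ¬∃ O : GOrientation G, ∀ v, outDeg O v ∈ H v)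
    {O : GOrientation G} {u : V} (hO : FeasibleAway H O u) : outDeg O u ∉ H u := fun hu =>
  hno ⟨O, fun v => (eq_or_ne v u).elim (· ▸ hu) (hO v)⟩

variable [Finite V] (hdense : ∀ v i, i ∉ H v → i + 1 ∈ H v)
include hdense

lemma FeasibleAway.setSrc {O : GOrientation G} {a u w : V} (hO : FeasibleAway H O a)
    (ha : outDeg O a ∉ H a) (hadj : G.Adj a u) (hw : w ∈ s(a, u))
    (hsw : O.src s(a, u) ≠ w) : FeasibleAway H (O.setSrc s(a, u) w hw) u := by
  intro v hvu
  rcases eq_or_ne v a with rfl | hva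
  · exact O.outDeg_setSrc_mem hdense hadj hw hsw ha
  · rw [O.outDeg_setSrc_of_notMem hw (by simp [hva, hvu])]
    exact hO v hva

variable (hno : ¬∃ O : GOrientation G, ∀ v, outDeg O v ∈ H v)
include hno

lemma exists_feasibleAway (hconn : G.Connected) :
    ∃ x, ∃ O : GOrientation G, FeasibleAway H O x := by
  let O := Function.argmin fun O : GOrientation G => (badSet H O).ncard
  obtain ⟨x, hx⟩ : (badSet H O).Nonempty := by
    by_contra h
    exact hno ⟨O, fun v => by_contra fun hv => h ⟨v, hv⟩⟩
  refine ⟨x, O, fun v hvx => by_contra fun hv => ?_⟩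
  obtain ⟨O', hO'⟩ := exists_ncard_badSet_lt hdense (hconn.preconnected v x).some hvx hv hx
  exact (Function.argmin_le (fun O : GOrientation G => (badSet H O).ncard) O').not_gt hO'

lemma FeasibleAway.exists_of_walk {a b : V} (p : G.Walk a b) {O : GOrientation G}
    (hO : FeasibleAway H O a) :
    ∃ O' : GOrientation G, FeasibleAway H O' b ∧ ∀ e ∉ p.edges, O'.src e = O.src e := by
  induction p generalizing O with
  | nil => exact ⟨O, hO, fun _ _ => rfl⟩
  | cons hadj q ih =>
    obtain ⟨w, hw, hsw⟩ := O.exists_setSrc_ne hadj.ne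
    obtain ⟨O', hO', hsrc⟩ := ih (hO.setSrc hdense (hO.outDeg_notMem hno) hadj hw hsw)
    refine ⟨O', hO', fun e he => ?_⟩
    rw [Walk.edges_cons, List.mem_cons, not_or] at he
    rw [hsrc e he.2, O.setSrc_src_of_ne hw he.1]

lemma FeasibleAway.exists_of_preconnected_induce {z : V} (hz : (G.induce {z}ᶜ).Preconnected)
    {w t : V} (hw : w ≠ z) (ht : t ≠ z) {O : GOrientation G} (hO : FeasibleAway H O w) :
    ∃ O' : GOrientation G, FeasibleAway H O' t ∧ ∀ e, z ∈ e → O'.src e = O.src e := by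
  obtain ⟨p, hp⟩ := exists_walk_forall_edges_notMem hz hw ht
  obtain ⟨O', hO', hsrc⟩ := hO.exists_of_walk hdense hno p
  exact ⟨O', hO', fun e hze => hsrc e fun he => hp e he hze⟩

end FeasibleAway

section Dset

variable {V : Type*} [Finite V] {G : SimpleGraph V} {H : V → Set ℕ}
  (hdense : ∀ v i, i ∉ H v → i + 1 ∈ H v)
  (hno : ¬∃ O : GOrientation G, ∀ v, outDeg O v ∈ H v)

include hno in
lemma dset_subset_forbidden (u : V) : Dset G H u ⊆ {i | i ≤ deg G u} \ H u := by
  rintro _ ⟨O, hO : FeasibleAway H O u, rfl⟩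
  exact ⟨O.outDeg_le_deg u, hO.outDeg_notMem hno⟩

variable {z : V} (hz : (G.induce {z}ᶜ).Preconnected)
include hdense hno hz

lemma mem_dset_of_add_two_mem {d : ℕ} (hd : d + 2 ∈ Dset G H z) : d ∈ Dset G H z := by
  obtain ⟨O, hO : FeasibleAway H O z, hOd⟩ := hd
  have htwo : 1 < (O.outEdges z).ncard := by rw [← O.outDeg_eq_ncard_outEdges]; omega
  obtain ⟨e₁, ⟨he₁, hs₁⟩, e₂, ⟨he₂, hs₂⟩, hne⟩ := (Set.one_lt_ncard).mp htwo
  obtain ⟨w, hzw, rfl⟩ := exists_adj_eq_of_mem_edgeSet he₁ (hs₁ ▸ O.mem _ he₁)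
  obtain ⟨t, hzt, rfl⟩ := exists_adj_eq_of_mem_edgeSet he₂ (hs₂ ▸ O.mem _ he₂)
  rw [Sym2.eq_swap (a := z) (b := t)] at he₂ hs₂ hne
  have hsw : O.src s(z, w) ≠ w := by rw [hs₁]; exact hzw.ne
  have hd₁ := O.outDeg_setSrc_source (Sym2.mem_mk_right z w) he₁ hsw
  rw [hs₁] at hd₁
  have hO₁ := hO.setSrc hdense (hO.outDeg_notMem hno) hzw (Sym2.mem_mk_right z w) hsw
  obtain ⟨O₂, hO₂, hsrc⟩ := hO₁.exists_of_preconnected_induce hdense hno hz hzw.ne' hzt.ne'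
  have hs₂' : O₂.src s(t, z) = z := by
    rw [hsrc _ (Sym2.mem_mk_right t z), O.setSrc_src_of_ne _ hne.symm, hs₂]
  have hst : O₂.src s(t, z) ≠ t := by rw [hs₂']; exact hzt.ne
  have hd₂ := GOrientation.outDeg_congr hsrc
  have hd₃ := O₂.outDeg_setSrc_source (Sym2.mem_mk_left t z) he₂ hst
  rw [hs₂'] at hd₃
  exact ⟨_, hO₂.setSrc hdense (hO₂.outDeg_notMem hno) hzt.symm _ hst, by omega⟩

lemma add_two_mem_dset {d : ℕ} (hd : d ∈ Dset G H z) (hdeg : d + 2 ≤ deg G z) :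
    d + 2 ∈ Dset G H z := by
  obtain ⟨O, hO : FeasibleAway H O z, hOd⟩ := hd
  have htwo : 1 < (G.incidenceSet z \ O.outEdges z).ncard := by
    rw [Set.ncard_sdiff (O.outEdges_subset_incidenceSet z), G.ncard_incidenceSet_eq_deg,
      ← O.outDeg_eq_ncard_outEdges]
    omega
  obtain ⟨e₁, ⟨⟨he₁, hz₁⟩, hs₁⟩, e₂, ⟨⟨he₂, hz₂⟩, hs₂⟩, hne⟩ :=
    (Set.one_lt_ncard).mp htwo
  obtain ⟨w, hzw, rfl⟩ := exists_adj_eq_of_mem_edgeSet he₁ hz₁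
  obtain ⟨t, hzt, rfl⟩ := exists_adj_eq_of_mem_edgeSet he₂ hz₂
  rw [Sym2.eq_swap (a := z) (b := t)] at he₂ hs₂ hne
  replace hs₁ : O.src s(z, w) ≠ z := fun h => hs₁ ⟨he₁, h⟩
  replace hs₂ : O.src s(t, z) ≠ z := fun h => hs₂ ⟨he₂, h⟩
  have hd₁ := O.outDeg_setSrc_target (Sym2.mem_mk_left z w) he₁ hs₁
  have hO₁ := hO.setSrc hdense (hO.outDeg_notMem hno) hzw (Sym2.mem_mk_left z w) hs₁
  obtain ⟨O₂, hO₂, hsrc⟩ := hO₁.exists_of_preconnected_induce hdense hno hz hzw.ne' hzt.ne'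
  have hs₂' : O₂.src s(t, z) ≠ z := by
    rwa [hsrc _ (Sym2.mem_mk_right t z), O.setSrc_src_of_ne _ hne.symm]
  have hd₂ := GOrientation.outDeg_congr hsrc
  have hd₃ := O₂.outDeg_setSrc_target (Sym2.mem_mk_right t z) he₂ hs₂'
  exact ⟨_, hO₂.setSrc hdense (hO₂.outDeg_notMem hno) hzt.symm _ hs₂', by omega⟩

lemma mem_dset_of_mod_two_eq {d i : ℕ} (hd : d ∈ Dset G H z) (hi : i ≤ deg G z)
    (hmod : i % 2 = d % 2) : i ∈ Dset G H z := by
  obtain ⟨k, rfl | rfl⟩ : ∃ k, i = d + 2 * k ∨ d = i + 2 * k :=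
    ⟨(max i d - min i d) / 2, by omega⟩
  · induction k with
    | zero => exact hd
    | succ k ih => exact add_two_mem_dset hdense hno hz (ih (by omega) (by omega)) (by omega)
  · induction k with
    | zero => exact hd
    | succ k ih => exact ih (mem_dset_of_add_two_mem hdense hno hz hd) (by omega)

end Dset

theorem stmt10 {V : Type*} [Fintype V] (G : SimpleGraph V) (F H : V → Set ℕ)
    (hFH : ∀ v, F v = {i | i ≤ deg G v} \ H v) (hd : DensePair G H)
    (hcard : ∀ v, ((F v).ncard : ℚ) ≤ ((deg G v : ℚ) - 1) / 2) :
    ∃ O : GOrientation G, ∀ v, outDeg O v ∈ H v := by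
  obtain ⟨hconn, hdense⟩ := hd
  by_contra hno
  obtain ⟨x, O, hO⟩ := exists_feasibleAway hdense hno hconn
  obtain ⟨z, hz⟩ := hconn.exists_preconnected_induce_compl_singleton_of_finite
  obtain ⟨Oz, hOz, -⟩ := hO.exists_of_walk hdense hno (hconn.preconnected x z).some
  have hforb : ∀ i ≤ deg G z, i % 2 = outDeg Oz z % 2 → i ∈ F z := fun i hi hmod =>
    hFH z ▸ dset_subset_forbidden hno z
      (mem_dset_of_mod_two_eq hdense hno hz ⟨Oz, hOz, rfl⟩ hi hmod)
  have hfin : (F z).Finite := (Set.finite_Iic (deg G z)).subset (hFH z ▸ fun _ hi => hi.1)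
  have hdeg : (deg G z : ℚ) ≤ 2 * (F z).ncard := by
    exact_mod_cast Nat.le_two_mul_ncard_of_forall_mod_two_eq hfin hforb
  linarith [hcard z]
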